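/- Let f : ℝ^d → ℝ be convex and twice differentiable with minimizer x⋆, and let X solve X''(t) + (3/t) X'(t) + ∇f(X t) = 0. Then d/dt [t²(f(X t) - f⋆) + 2‖(X t - x⋆) + (t/2)X'(t)‖²] = 2t (f(X t) - f⋆ - ⟪∇f(X t), X t - x⋆⟫), which is ≤ 0 by convexity. -/

import Mathlib

/-!
With `Y t = (X t - x⋆) + (t / 2) X' t`, the flow equation `t X'' + 3 X' = -t ∇f(X)` makes the
velocity terms in `Y' = (3/2) X' + (t/2) X''` cancel, leaving `Y' = -(t/2) ∇f(X)`. Differentiating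
the energy, the `t² ⟪∇f(X), X'⟫` coming from the potential part is then cancelled by the cross term
of `2 ‖Y‖²`, and what remains is `2t (f(X) - f⋆ - ⟪∇f(X), X - x⋆⟫)`, nonpositive by the first-order
characterisation of convexity.
-/

open scoped RealInnerProductSpace
open Real Set

section

variable {E : Type*} [NormedAddCommGroup E] [InnerProductSpace ℝ E]

theorem HasGradientAt.comp_hasDerivAt [CompleteSpace E] {f : E → ℝ} {g : E} {γ : ℝ → E}
    {γ' : E} {t : ℝ} (hf : HasGradientAt f g (γ t)) (hγ : HasDerivAt γ γ' t) :
    HasDerivAt (fun s => f (γ s)) ⟪g, γ'⟫ t := by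
  simpa [Function.comp_def] using hf.hasFDerivAt.comp_hasDerivAt t hγ

theorem hasDerivAt_sub_add_half_smul_of_accelerated_flow {X X' X'' : ℝ → E} {g x : E} {t : ℝ}
    (ht : t ≠ 0) (hX : HasDerivAt X (X' t) t) (hX' : HasDerivAt X' (X'' t) t)
    (hODE : X'' t + (3 / t) • X' t + g = 0) :
    HasDerivAt (fun s => (X s - x) + (s / 2) • X' s) (-(t / 2) • g) t := by
  have hX'' : X'' t = -(3 / t) • X' t - g := by
    rw [← sub_eq_zero, ← hODE]
    module
  refine ((hX.sub_const x).add (((hasDerivAt_id' t).div_const 2).smul hX')).congr_deriv ?_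
  rw [hX'']
  match_scalars <;> field_simp
  ring

theorem hasDerivAt_lyapunov_of_accelerated_flow [CompleteSpace E] {f : E → ℝ}
    {X X' X'' : ℝ → E} {x : E} {c t : ℝ} (ht : t ≠ 0) (hf : DifferentiableAt ℝ f (X t))
    (hX : HasDerivAt X (X' t) t) (hX' : HasDerivAt X' (X'' t) t)
    (hODE : X'' t + (3 / t) • X' t + gradient f (X t) = 0) :
    HasDerivAt (fun s => s ^ 2 * (f (X s) - c) + 2 * ‖(X s - x) + (s / 2) • X' s‖ ^ 2)
      (2 * t * (f (X t) - c - ⟪gradient f (X t), X t - x⟫)) t := by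
  have hpot := (hasDerivAt_pow 2 t).mul
    ((hf.hasGradientAt.comp_hasDerivAt hX).sub_const c)
  have hkin := (hasDerivAt_sub_add_half_smul_of_accelerated_flow (x := x) ht hX hX' hODE).norm_sq
  refine (hpot.add (hkin.const_mul 2)).congr_deriv ?_
  simp only [Nat.cast_ofNat, real_inner_smul_right, inner_add_left, real_inner_smul_left,
    real_inner_comm (gradient f (X t)) (X t - x), real_inner_comm (gradient f (X t)) (X' t)]
  ring

end

theorem accelerated_gradient_flow_lyapunov_derivative_general
    (d : ℕ) (f : EuclideanSpace ℝ (Fin d) → ℝ) (hf : ContDiff ℝ 2 f)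
    (hconv : ∀ x y, f y ≥ f x + ⟪gradient f x, y - x⟫)
    (xstar : EuclideanSpace ℝ (Fin d))
    (X X' X'' : ℝ → EuclideanSpace ℝ (Fin d))
    (hX : ∀ t ∈ Set.Ioi (0 : ℝ), HasDerivAt X (X' t) t)
    (hX' : ∀ t ∈ Set.Ioi (0 : ℝ), HasDerivAt X' (X'' t) t)
    (hODE : ∀ t ∈ Set.Ioi (0 : ℝ),
      X'' t + (3 / t) • X' t + gradient f (X t) = 0) :
    ∀ t ∈ Set.Ioi (0 : ℝ),
      deriv (fun s => s ^ 2 * (f (X s) - f xstar)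
          + 2 * ‖(X s - xstar) + (s / 2) • X' s‖ ^ 2) t =
        2 * t * (f (X t) - f xstar - ⟪gradient f (X t), X t - xstar⟫) ∧
      2 * t * (f (X t) - f xstar - ⟪gradient f (X t), X t - xstar⟫) ≤ 0 := by
  intro t ht
  have ht0 : 0 < t := ht
  refine ⟨(hasDerivAt_lyapunov_of_accelerated_flow ht0.ne' (hf.differentiable two_ne_zero _)
    (hX t ht) (hX' t ht) (hODE t ht)).deriv, ?_⟩
  have hgap : f (X t) - f xstar - ⟪gradient f (X t), X t - xstar⟫ ≤ 0 := by
    have h := hconv (X t) xstar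
    rw [← neg_sub (X t) xstar, inner_neg_right] at h
    linarith
  exact mul_nonpos_of_nonneg_of_nonpos (by positivity) hgap

theorem accelerated_gradient_flow_lyapunov_derivative
    (d : ℕ) (f : EuclideanSpace ℝ (Fin d) → ℝ) (hf : ContDiff ℝ 2 f)
    (hconv : ∀ x y, f y ≥ f x + ⟪gradient f x, y - x⟫)
    (xstar : EuclideanSpace ℝ (Fin d)) (hmin : ∀ y, f xstar ≤ f y)
    (X X' X'' : ℝ → EuclideanSpace ℝ (Fin d))
    (hX : ∀ t ∈ Set.Ioi (0 : ℝ), HasDerivAt X (X' t) t)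
    (hX' : ∀ t ∈ Set.Ioi (0 : ℝ), HasDerivAt X' (X'' t) t)
    (hODE : ∀ t ∈ Set.Ioi (0 : ℝ),
      X'' t + (3 / t) • X' t + gradient f (X t) = 0) :
    ∀ t ∈ Set.Ioi (0 : ℝ),
      deriv (fun s => s ^ 2 * (f (X s) - f xstar)
          + 2 * ‖(X s - xstar) + (s / 2) • X' s‖ ^ 2) t =
        2 * t * (f (X t) - f xstar - ⟪gradient f (X t), X t - xstar⟫) ∧
      2 * t * (f (X t) - f xstar - ⟪gradient f (X t), X t - xstar⟫) ≤ 0 :=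
  accelerated_gradient_flow_lyapunov_derivative_general d f hf hconv xstar X X' X'' hX hX' hODE
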